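/- If an ensemble {p_i, |ψ_i⟩}_{i=1}^N of pure states in ℂ^d is an ε-approximate state k-design, i.e., (1−ε)·Π_sym/Tr(Π_sym) ⪯ ∑_i p_i |ψ_i⟩⟨ψ_i|^{⊗k} ⪯ (1+ε)·Π_sym/Tr(Π_sym), then the k-copy discriminability of {|ψ_i⟩} with uniform prior is at least ((1−ε)/(1+ε))·C(d+k-1,k)/N. -/

import Mathlib

open ComplexOrder
open scoped BigOperators
open Matrix

/-- The `k`-fold tensor power of a matrix on `ℂ^d`. -/
noncomputable def kronPow (d k : ℕ) (A : Matrix (Fin d) (Fin d) ℂ) :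
    Matrix (Fin k → Fin d) (Fin k → Fin d) ℂ :=
  Matrix.of fun f g => ∏ l, A (f l) (g l)

/-- The rank-one projector `|ψ⟩⟨ψ|`. -/
noncomputable def pureProj (d : ℕ) (ψ : Fin d → ℂ) : Matrix (Fin d) (Fin d) ℂ :=
  Matrix.of fun a b => ψ a * star (ψ b)

/-- The permutation operator `V_π` on `(ℂ^d)^{⊗k}`. -/
noncomputable def permOp (d k : ℕ) (π : Equiv.Perm (Fin k)) :
    Matrix (Fin k → Fin d) (Fin k → Fin d) ℂ :=
  Matrix.of fun f g => if (∀ i, f (π i) = g i) then 1 else 0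

/-- The projector onto the symmetric subspace of `(ℂ^d)^{⊗k}`. -/
noncomputable def symProj (d k : ℕ) : Matrix (Fin k → Fin d) (Fin k → Fin d) ℂ :=
  ((k.factorial : ℂ))⁻¹ • ∑ π : Equiv.Perm (Fin k), permOp d k π

section Aux

variable {n : Type*} [Fintype n] [DecidableEq n]

/-- Outer product matrix `|v⟩⟨v|` is PSD. -/
lemma outer_posSemidef (v : n → ℂ) :
    (Matrix.of fun f g => v f * star (v g) : Matrix n n ℂ).PosSemidef := by
  refine Matrix.PosSemidef.of_dotProduct_mulVec_nonneg ?_ ?_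
  · ext f g
    simp [Matrix.conjTranspose_apply, mul_comm]
  · intro x
    have key : (star x) ⬝ᵥ ((Matrix.of fun f g => v f * star (v g) : Matrix n n ℂ) *ᵥ x) =
        (∑ f, star (x f) * v f) * star (∑ f, star (x f) * v f) := by
      rw [star_sum]
      simp only [dotProduct, Matrix.mulVec, Matrix.of_apply, Pi.star_apply,
        Finset.mul_sum, Finset.sum_mul, StarMul.star_mul, star_star]
      rw [Finset.sum_comm]
      refine Finset.sum_congr rfl fun f _ => Finset.sum_congr rfl fun g _ => by ring
    rw [key]
    exact mul_star_self_nonneg _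

lemma posSemidef_real_smul {A : Matrix n n ℂ} (hA : A.PosSemidef) {r : ℝ} (hr : 0 ≤ r) :
    ((r : ℂ) • A).PosSemidef := by
  refine Matrix.PosSemidef.of_dotProduct_mulVec_nonneg ?_ ?_
  · show ((r:ℂ) • A)ᴴ = (r:ℂ) • A
    rw [Matrix.conjTranspose_smul, hA.1.eq, Complex.star_def, Complex.conj_ofReal]
  · intro x
    rw [Matrix.smul_mulVec, dotProduct_smul, smul_eq_mul]
    exact mul_nonneg (Complex.zero_le_real.mpr hr) (hA.dotProduct_mulVec_nonneg x)

lemma posSemidef_trace_nonneg {A : Matrix n n ℂ} (hA : A.PosSemidef) : 0 ≤ A.trace := by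
  refine Finset.sum_nonneg fun i _ => ?_
  have := hA.dotProduct_mulVec_nonneg (Pi.single i 1)
  simpa [Matrix.mulVec_single, dotProduct, Pi.single_apply, apply_ite,
    Finset.sum_ite_eq'] using this

lemma posSemidef_trace_mul_nonneg {A B : Matrix n n ℂ} (hA : A.PosSemidef)
    (hB : B.PosSemidef) : 0 ≤ (A * B).trace := by
  obtain ⟨C, rfl⟩ : ∃ C : Matrix n n ℂ, B = Cᴴ * C := by
    open scoped MatrixOrder in
    exact CStarAlgebra.nonneg_iff_eq_star_mul_self.mp hB.nonneg
  have h1 : (A * (Cᴴ * C)).trace = (C * A * Cᴴ).trace := by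
    rw [← Matrix.mul_assoc, Matrix.trace_mul_cycle]
  rw [h1]
  exact posSemidef_trace_nonneg (hA.mul_mul_conjTranspose_same C)

end Aux

lemma permOp_mul (d k : ℕ) (π τ : Equiv.Perm (Fin k)) :
    permOp d k π * permOp d k τ = permOp d k (π * τ) := by
  ext f g
  rw [Matrix.mul_apply]
  rw [Finset.sum_eq_single (fun i => f (π i))]
  · simp [permOp, Equiv.Perm.mul_apply]; congr
  · intro h _ hne
    simp only [permOp, Matrix.of_apply]
    rw [if_neg, zero_mul]
    intro hcon
    exact hne (funext fun i => (hcon i).symm)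
  · intro h; exact absurd (Finset.mem_univ _) h

lemma permOp_conjTranspose (d k : ℕ) (π : Equiv.Perm (Fin k)) :
    (permOp d k π)ᴴ = permOp d k π⁻¹ := by
  ext f g
  simp only [Matrix.conjTranspose_apply, permOp, Matrix.of_apply, apply_ite star,
    star_one, star_zero]
  have hiff : (∀ i, g (π i) = f i) ↔ (∀ i, f (π⁻¹ i) = g i) := by
    constructor
    · intro h i
      simpa using (h (π⁻¹ i)).symm
    · intro h i
      simpa using (h (π i)).symm
  rw [if_congr hiff rfl rfl]

lemma symProj_isHermitian (d k : ℕ) : (symProj d k).IsHermitian := by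
  unfold symProj
  rw [Matrix.IsHermitian]
  rw [Matrix.conjTranspose_smul, Matrix.conjTranspose_sum]
  congr 1
  · simp [RCLike.star_def]
  · simp_rw [permOp_conjTranspose]
    exact Fintype.sum_equiv (Equiv.inv _) _ _ fun π => rfl

lemma symProj_mul_self (d k : ℕ) : symProj d k * symProj d k = symProj d k := by
  have hfac : ((k.factorial : ℂ)) ≠ 0 := Nat.cast_ne_zero.mpr k.factorial_ne_zero
  unfold symProj
  rw [Matrix.smul_mul, Matrix.mul_smul, Matrix.sum_mul]
  rw [smul_smul]
  have : ∑ π : Equiv.Perm (Fin k), permOp d k π * (∑ τ : Equiv.Perm (Fin k), permOp d k τ)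
      = (k.factorial : ℂ) • ∑ σ : Equiv.Perm (Fin k), permOp d k σ := by
    have hinner : ∀ π : Equiv.Perm (Fin k),
        permOp d k π * (∑ τ : Equiv.Perm (Fin k), permOp d k τ)
          = ∑ σ : Equiv.Perm (Fin k), permOp d k σ := by
      intro π
      rw [Matrix.mul_sum]
      simp_rw [permOp_mul]
      exact Fintype.sum_equiv (Equiv.mulLeft π) _ _ fun τ => rfl
    rw [Finset.sum_congr rfl fun π _ => hinner π]
    rw [Finset.sum_const, Finset.card_univ, Fintype.card_perm]
    rw [Nat.cast_smul_eq_nsmul, Fintype.card_fin]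
  rw [this, smul_smul]
  congr 1
  field_simp

lemma one_sub_symProj_posSemidef (d k : ℕ) :
    ((1 : Matrix (Fin k → Fin d) (Fin k → Fin d) ℂ) - symProj d k).PosSemidef := by
  set Q := (1 : Matrix (Fin k → Fin d) (Fin k → Fin d) ℂ) - symProj d k with hQ
  have hherm : Qᴴ = Q := by
    rw [hQ, Matrix.conjTranspose_sub, Matrix.conjTranspose_one, (symProj_isHermitian d k).eq]
  have hidem : Q * Q = Q := by
    rw [hQ, Matrix.sub_mul, Matrix.one_mul, Matrix.mul_sub, Matrix.mul_one, symProj_mul_self]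
    abel
  have := Matrix.posSemidef_conjTranspose_mul_self Q
  rwa [hherm, hidem] at this

lemma kronPow_pureProj_eq (d k : ℕ) (v : Fin d → ℂ) :
    kronPow d k (pureProj d v) =
      Matrix.of fun f g => (∏ l, v (f l)) * star (∏ l, v (g l)) := by
  ext f g
  simp only [kronPow, pureProj, Matrix.of_apply, star_prod]
  rw [Finset.prod_mul_distrib]

/-- If `{p i, ψ i}` is an `ε`-approximate state `k`-design, then the `k`-copy
discriminability of `{ψ i}` (uniform prior) is at least `((1−ε)/(1+ε))·C(d+k-1,k)/N`:
some POVM attains that average success probability. -/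
theorem approx_design_discriminability (d N k : ℕ) (hN : 0 < N) (ε : ℝ) (hε : 0 ≤ ε)
    (ψ : Fin N → Fin d → ℂ) (hψ : ∀ i, ∑ j, star (ψ i j) * ψ i j = 1)
    (p : Fin N → ℝ) (hp0 : ∀ i, 0 ≤ p i) (hp1 : ∑ i, p i = 1)
    (hlow : (∑ i, (p i : ℂ) • kronPow d k (pureProj d (ψ i)) -
      ((1 - ε : ℝ) : ℂ) • ((Nat.choose (d + k - 1) k : ℂ))⁻¹ • symProj d k).PosSemidef)
    (hup : (((1 + ε : ℝ) : ℂ) • ((Nat.choose (d + k - 1) k : ℂ))⁻¹ • symProj d k -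
      ∑ i, (p i : ℂ) • kronPow d k (pureProj d (ψ i))).PosSemidef) :
    ∃ M : Fin N → Matrix (Fin k → Fin d) (Fin k → Fin d) ℂ,
      (∀ i, (M i).PosSemidef) ∧ (∑ i, M i = 1) ∧
      ((1 - ε) / (1 + ε)) * ((Nat.choose (d + k - 1) k : ℝ) / N) ≤
        (N : ℝ)⁻¹ * (∑ i, (kronPow d k (pureProj d (ψ i)) * M i).trace).re := by
  classical
  -- basic positivity facts
  set C : ℕ := Nat.choose (d + k - 1) k with hC
  have hd : 0 < d := by
    by_contra hd0
    have hd0' : d = 0 := by omega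
    have := hψ ⟨0, hN⟩
    subst hd0'
    simp at this
  have hCpos : 0 < C := Nat.choose_pos (by omega)
  have h1ε : (0:ℝ) < 1 + ε := by linarith
  set c : ℝ := (C : ℝ) / (1 + ε) with hc
  have hc0 : 0 ≤ c := div_nonneg (Nat.cast_nonneg _) h1ε.le
  -- notation
  set R : Fin N → Matrix (Fin k → Fin d) (Fin k → Fin d) ℂ :=
    fun i => kronPow d k (pureProj d (ψ i)) with hR
  set σm : Matrix (Fin k → Fin d) (Fin k → Fin d) ℂ := ∑ i, (p i : ℂ) • R i with hσ
  set Φ : Fin N → (Fin k → Fin d) → ℂ := fun i f => ∏ l, ψ i (f l) with hΦ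
  have hRouter : ∀ i, R i = Matrix.of fun f g => Φ i f * star (Φ i g) := fun i =>
    kronPow_pureProj_eq d k (ψ i)
  have hRpsd : ∀ i, (R i).PosSemidef := fun i => (hRouter i) ▸ outer_posSemidef (Φ i)
  -- normalization of Φ
  have hΦnorm : ∀ i, ∑ f, star (Φ i f) * Φ i f = 1 := by
    intro i
    have : ∀ f : Fin k → Fin d, star (Φ i f) * Φ i f
        = ∏ l, (star (ψ i (f l)) * ψ i (f l)) := by
      intro f
      simp only [hΦ, star_prod, Finset.prod_mul_distrib]
    rw [Finset.sum_congr rfl fun f _ => this f]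
    have hps := Finset.prod_univ_sum (fun _ : Fin k => (Finset.univ : Finset (Fin d)))
      (fun l j => star (ψ i j) * ψ i j)
    rw [Fintype.piFinset_univ] at hps
    rw [← hps]
    simp only [hψ i, Finset.prod_const_one]
  -- R i is a projection of trace 1
  have hRtrace : ∀ i, (R i).trace = 1 := by
    intro i
    rw [hRouter i]
    unfold Matrix.trace
    simp only [Matrix.diag_apply, Matrix.of_apply]
    rw [← hΦnorm i]
    exact Finset.sum_congr rfl fun f _ => mul_comm _ _
  have hRsq : ∀ i, R i * R i = R i := by
    intro i
    rw [hRouter i]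
    ext f g
    rw [Matrix.mul_apply]
    have : ∀ h : Fin k → Fin d,
        (Φ i f * star (Φ i h)) * (Φ i h * star (Φ i g))
          = (Φ i f * star (Φ i g)) * (star (Φ i h) * Φ i h) := fun h => by ring
    simp only [Matrix.of_apply]
    rw [Finset.sum_congr rfl fun h _ => this h, ← Finset.mul_sum, hΦnorm i, mul_one]
  -- the completion operator E
  set E : Matrix (Fin k → Fin d) (Fin k → Fin d) ℂ := 1 - (c : ℂ) • σm with hE
  have hEdecomp : E = (1 - symProj d k) +
      (c : ℂ) • (((1 + ε : ℝ) : ℂ) • ((C : ℂ))⁻¹ • symProj d k - σm) := by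
    rw [hE, smul_sub, smul_smul, smul_smul]
    have hcoef : (c : ℂ) * ((1 + ε : ℝ) : ℂ) * ((C : ℂ))⁻¹ = 1 := by
      have hC0 : ((C : ℝ)) ≠ 0 := by positivity
      have hr : c * (1 + ε) * (C : ℝ)⁻¹ = 1 := by
        rw [hc, div_mul_cancel₀ _ h1ε.ne']
        field_simp
      calc (c : ℂ) * ((1 + ε : ℝ) : ℂ) * ((C : ℂ))⁻¹
          = (((c * (1 + ε) * (C:ℝ)⁻¹ : ℝ)) : ℂ) := by push_cast; ring
        _ = 1 := by rw [hr]; norm_num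
    rw [hcoef, one_smul]
    abel
  have hEpsd : E.PosSemidef := by
    rw [hEdecomp]
    exact (one_sub_symProj_posSemidef d k).add (posSemidef_real_smul hup hc0)
  -- the POVM
  set i₀ : Fin N := ⟨0, hN⟩ with hi₀
  set M : Fin N → Matrix (Fin k → Fin d) (Fin k → Fin d) ℂ :=
    fun i => ((c * p i : ℝ) : ℂ) • R i + (if i = i₀ then E else 0) with hM
  refine ⟨M, ?_, ?_, ?_⟩
  · intro i
    refine (posSemidef_real_smul (hRpsd i) (mul_nonneg hc0 (hp0 i))).add ?_
    by_cases hii : i = i₀ <;> simp [hii, hEpsd, Matrix.PosSemidef.zero]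
  · rw [hM]
    rw [Finset.sum_add_distrib]
    have h1 : ∑ i, (if i = i₀ then E else 0) = E := by
      simp [Finset.sum_ite_eq']
    have h2 : ∑ i, ((c * p i : ℝ) : ℂ) • R i = (c : ℂ) • σm := by
      rw [hσ, Finset.smul_sum]
      refine Finset.sum_congr rfl fun i _ => ?_
      rw [smul_smul]
      push_cast
      ring_nf
    rw [h1, h2, hE]
    abel
  · -- trace computation
    have htr : ∀ i, (R i * M i).trace
        = ((c * p i : ℝ) : ℂ) + (if i = i₀ then (R i * E).trace else 0) := by
      intro i
      rw [hM]
      simp only []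
      rw [Matrix.mul_add, Matrix.trace_add, Matrix.mul_smul, Matrix.trace_smul,
        hRsq i, hRtrace i, smul_eq_mul, mul_one]
      congr 1
      by_cases hii : i = i₀ <;> simp [hii]
    have hsum : ∑ i, (R i * M i).trace = (c : ℂ) + (R i₀ * E).trace := by
      rw [Finset.sum_congr rfl fun i _ => htr i, Finset.sum_add_distrib]
      congr 1
      · rw [← Complex.ofReal_sum]
        norm_cast
        rw [← Finset.mul_sum, hp1, mul_one]
      · simp [Finset.sum_ite_eq']
    have htE : 0 ≤ (R i₀ * E).trace := posSemidef_trace_mul_nonneg (hRpsd i₀) hEpsd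
    have htEre : 0 ≤ (R i₀ * E).trace.re := by
      rw [Complex.le_def] at htE
      simpa using htE.1
    have hre : (∑ i, (R i * M i).trace).re = c + (R i₀ * E).trace.re := by
      rw [hsum, Complex.add_re, Complex.ofReal_re]
    show ((1 - ε) / (1 + ε)) * ((C : ℝ) / N) ≤ (N : ℝ)⁻¹ * (∑ i, (R i * M i).trace).re
    rw [hre]
    have hNpos : (0:ℝ) < N := Nat.cast_pos.mpr hN
    have key : ((1 - ε) / (1 + ε)) * ((C : ℝ) / N) ≤ (N : ℝ)⁻¹ * c := by
      have hC0 : (0:ℝ) ≤ (C:ℝ) := Nat.cast_nonneg _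
      have h2 : (N : ℝ)⁻¹ * c = (C : ℝ) / ((1 + ε) * N) := by
        rw [hc, inv_mul_eq_div, div_div]
      rw [div_mul_div_comm, h2, div_le_div_iff₀ (by positivity) (by positivity)]
      nlinarith [mul_nonneg (mul_nonneg (mul_nonneg hε hC0) h1ε.le) hNpos.le]
    calc ((1 - ε) / (1 + ε)) * ((C : ℝ) / N) ≤ (N : ℝ)⁻¹ * c := key
      _ ≤ (N : ℝ)⁻¹ * (c + (R i₀ * E).trace.re) := by
          apply mul_le_mul_of_nonneg_left (by linarith) (by positivity)
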